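/- arXiv:2311.05721 — 4 statements merged into one kernel-verified Lean document; each statement's English description precedes it below -/
import Mathlib

section
/- Let G be a group and A a finite subset of G containing the identity such that A is a weakly approximate group with constant L_A (i.e. A⁻¹A is covered by L_A left translates of A) and A⁻¹ is a weakly approximate group with constant L_{A⁻¹} (i.e. AA⁻¹ is covered by L_{A⁻¹} left translates of A⁻¹). Then B = A⁻¹ ∪ A is a symmetric weakly approximate group whose constant satisfies L_B ≤ 2·L_A·L_{A⁻¹} + L_A + L_{A⁻¹}. -/
/-!
With `B = A⁻¹ ∪ A` we have `B⁻¹ * B = B * B = A⁻¹A⁻¹ ∪ A⁻¹A ∪ AA⁻¹ ∪ AA`. If `A⁻¹A ⊆ X * A` and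
`AA⁻¹ ⊆ Y * A⁻¹`, then, since `1 ∈ A`,
`A⁻¹A⁻¹ ⊆ A⁻¹AA⁻¹ ⊆ X * AA⁻¹ ⊆ XY * A⁻¹` and `AA ⊆ AA⁻¹A ⊆ Y * A⁻¹A ⊆ YX * A`,
so `B⁻¹ * B` is covered by the translates of `B` by `XY ∪ YX ∪ X ∪ Y`.
-/

open Pointwise

/-- A finite subset `A` of a group `G` containing the identity is a weakly approximate
group with constant `L` if `A⁻¹ * A` is covered by `L` left translates of `A`. -/
def IsWeakApproxGroup {G : Type*} [Group G] (A : Set G) (L : ℕ) : Prop :=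
  A.Finite ∧ 1 ∈ A ∧ ∃ g : Fin L → G, A⁻¹ * A ⊆ ⋃ i, g i • A

section

variable {G : Type*} [Group G]

lemma Set.iUnion_smul_eq_range_mul {ι : Sort*} (g : ι → G) (A : Set G) :
    ⋃ i, g i • A = Set.range g * A := by
  rw [← Set.iUnion_mul_left_image, Set.biUnion_range]
  rfl

lemma Set.inv_inv_union_self (A : Set G) : (A⁻¹ ∪ A)⁻¹ = A⁻¹ ∪ A := by
  rw [Set.union_inv, inv_inv, Set.union_comm]

lemma Set.inv_union_self_mul_self_subset {A X Y : Set G} (h1 : (1 : G) ∈ A)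
    (hX : A⁻¹ * A ⊆ X * A) (hY : A * A⁻¹ ⊆ Y * A⁻¹) :
    (A⁻¹ ∪ A) * (A⁻¹ ∪ A) ⊆ (X * Y ∪ Y * X ∪ X ∪ Y) * (A⁻¹ ∪ A) := by
  set Z := X * Y ∪ Y * X ∪ X ∪ Y
  have hA : A ⊆ A * A⁻¹ := Set.subset_mul_left A (by simpa using h1)
  have hA' : A⁻¹ ⊆ A⁻¹ * A := Set.subset_mul_left A⁻¹ h1
  have hXY : X * Y ⊆ Z := by grind
  have hYX : Y * X ⊆ Z := by grind
  have hXZ : X ⊆ Z := by grind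
  have hYZ : Y ⊆ Z := by grind
  rw [Set.union_mul, Set.mul_union, Set.mul_union]
  refine Set.union_subset (Set.union_subset ?_ ?_) (Set.union_subset ?_ ?_)
  · calc A⁻¹ * A⁻¹ ⊆ A⁻¹ * A * A⁻¹ := Set.mul_subset_mul_right hA'
      _ ⊆ X * A * A⁻¹ := Set.mul_subset_mul_right hX
      _ = X * (A * A⁻¹) := mul_assoc ..
      _ ⊆ X * (Y * A⁻¹) := Set.mul_subset_mul_left hY
      _ = X * Y * A⁻¹ := (mul_assoc ..).symm
      _ ⊆ Z * (A⁻¹ ∪ A) := Set.mul_subset_mul hXY Set.subset_union_left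
  · exact hX.trans (Set.mul_subset_mul hXZ Set.subset_union_right)
  · exact hY.trans (Set.mul_subset_mul hYZ Set.subset_union_left)
  · calc A * A ⊆ A * A⁻¹ * A := Set.mul_subset_mul_right hA
      _ ⊆ Y * A⁻¹ * A := Set.mul_subset_mul_right hY
      _ = Y * (A⁻¹ * A) := mul_assoc ..
      _ ⊆ Y * (X * A) := Set.mul_subset_mul_left hX
      _ = Y * X * A := (mul_assoc ..).symm
      _ ⊆ Z * (A⁻¹ ∪ A) := Set.mul_subset_mul hYX Set.subset_union_right

end

namespace IsWeakApproxGroup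

variable {G : Type*} [Group G] {A : Set G} {L : ℕ}

lemma exists_finset (h : IsWeakApproxGroup A L) :
    ∃ S : Finset G, S.card ≤ L ∧ A⁻¹ * A ⊆ (S : Set G) * A := by
  classical
  obtain ⟨-, -, g, hg⟩ := h
  refine ⟨Finset.univ.image g, ?_, ?_⟩
  · simpa using Finset.card_image_le (s := Finset.univ) (f := g)
  · simpa [Set.iUnion_smul_eq_range_mul] using hg

lemma of_finset (hfin : A.Finite) (h1 : 1 ∈ A) (S : Finset G)
    (hS : A⁻¹ * A ⊆ (S : Set G) * A) : IsWeakApproxGroup A S.card := by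
  refine ⟨hfin, h1, fun i => S.equivFin.symm i, ?_⟩
  rwa [Set.iUnion_smul_eq_range_mul, Set.range_comp' Subtype.val, S.equivFin.symm.range_eq_univ,
    Set.image_univ, Subtype.range_coe]

end IsWeakApproxGroup

theorem stmt0 {G : Type*} [Group G] (A : Set G) (LA LA' : ℕ)
    (hA : IsWeakApproxGroup A LA) (hA' : IsWeakApproxGroup A⁻¹ LA') :
    (A⁻¹ ∪ A) = (A⁻¹ ∪ A)⁻¹ ∧
      ∃ LB ≤ 2 * LA * LA' + LA + LA', IsWeakApproxGroup (A⁻¹ ∪ A) LB := by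
  classical
  obtain ⟨X, hXcard, hX⟩ := hA.exists_finset
  obtain ⟨Y, hYcard, hY⟩ := hA'.exists_finset
  rw [inv_inv] at hY
  have hcard : (X * Y ∪ Y * X ∪ X ∪ Y).card ≤ 2 * LA * LA' + LA + LA' :=
    calc (X * Y ∪ Y * X ∪ X ∪ Y).card ≤ (X * Y).card + (Y * X).card + X.card + Y.card := by
          grw [Finset.card_union_le, Finset.card_union_le, Finset.card_union_le]
      _ ≤ LA * LA' + LA' * LA + LA + LA' := by
          grw [Finset.card_mul_le, Finset.card_mul_le (s := Y), hXcard, hYcard]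
      _ = 2 * LA * LA' + LA + LA' := by ring
  refine ⟨(Set.inv_inv_union_self A).symm, _, hcard,
    .of_finset (hA.1.inv.union hA.1) (.inr hA.2.1) _ ?_⟩
  rw [Set.inv_inv_union_self]
  push_cast
  exact Set.inv_union_self_mul_self_subset hA.2.1 hX hY
end

section
/- Let (X,d_X) and (Y,d_Y) be compact metric spaces, ε > 0, and f : X → Y a continuous ε-embedding (i.e. diam(f⁻¹({y})) < ε for every y ∈ Y). Then there exists δ > 0 such that every continuous map g : X → Y with sup_{x∈X} d_Y(f(x), g(x)) < δ is also an ε-embedding. -/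
/-
The pairs `(a, b)` with `ε ≤ dist a b` form a compact subset of `X × X` on which `f a ≠ f b`, so
`dist (f a) (f b)` is bounded below there by some `c > 0`. If `g` is `c / 2`-close to `f` and
`g a = g b`, then `dist (f a) (f b) < c`, hence `dist a b < ε`; a compact fibre of `g` whose points
are all closer than `ε` has diameter `< ε`.
-/

open Metric Set

lemma IsCompact.diam_lt_of_forall_dist_lt {X : Type*} [PseudoMetricSpace X] {s : Set X} {ε : ℝ}
    (hs : IsCompact s) (hε : 0 < ε) (h : ∀ x ∈ s, ∀ y ∈ s, dist x y < ε) : diam s < ε := by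
  obtain ⟨r, hr, hle⟩ := (hs.prod hs).exists_forall_le'
    (f := fun p : X × X ↦ ε - dist p.1 p.2) (a := 0) (by fun_prop)
    fun p hp ↦ sub_pos.2 (h p.1 hp.1 p.2 hp.2)
  calc diam s ≤ max (ε - r) 0 :=
        diam_le_of_forall_dist_le (le_max_right _ _) fun x hx y hy ↦
          le_max_of_le_left (by linarith [hle (x, y) ⟨hx, hy⟩])
    _ < ε := max_lt (by linarith) hε

lemma exists_pos_le_dist_of_le_dist {X Y : Type*} [PseudoMetricSpace X] [CompactSpace X]
    [MetricSpace Y] {f : X → Y} (hf : Continuous f) {ε : ℝ}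
    (hsep : ∀ a b, ε ≤ dist a b → f a ≠ f b) :
    ∃ c > 0, ∀ a b, ε ≤ dist a b → c ≤ dist (f a) (f b) := by
  have hA : IsCompact {p : X × X | ε ≤ dist p.1 p.2} :=
    (isClosed_le continuous_const continuous_dist).isCompact
  obtain ⟨c, hc, hle⟩ := hA.exists_forall_le'
    (continuous_dist.comp (hf.prodMap hf)).continuousOn
    fun p hp ↦ dist_pos.2 (hsep p.1 p.2 hp)
  exact ⟨c, hc, fun a b hab ↦ hle (a, b) hab⟩

theorem stmt4_general {X Y : Type*} [MetricSpace X] [MetricSpace Y]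
    [CompactSpace X] (ε : ℝ) (hε : 0 < ε)
    (f : X → Y) (hf : Continuous f)
    (hemb : ∀ y : Y, Metric.diam (f ⁻¹' {y}) < ε) :
    ∃ δ > 0, ∀ g : X → Y, Continuous g →
      (∀ x, dist (f x) (g x) < δ) → ∀ y : Y, Metric.diam (g ⁻¹' {y}) < ε := by
  have hfibre : ∀ a b, ε ≤ dist a b → f a ≠ f b := fun a b hab hfab ↦
    (hab.trans (dist_le_diam_of_mem (s := f ⁻¹' {f b}) isBounded_of_compactSpace hfab rfl)).not_gt
      (hemb (f b))
  obtain ⟨c, hc, hsep⟩ := exists_pos_le_dist_of_le_dist hf hfibre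
  refine ⟨c / 2, half_pos hc, fun g hg hfg y ↦ ?_⟩
  refine (isClosed_singleton.preimage hg).isCompact.diam_lt_of_forall_dist_lt hε
    fun a ha b hb ↦ ?_
  by_contra! hab
  have hgab : g a = g b := ha.trans hb.symm
  have : dist (f a) (f b) < c := calc
    dist (f a) (f b) ≤ dist (f a) (g a) + dist (f b) (g b) := by
      simpa only [hgab, dist_comm (g b)] using dist_triangle (f a) (g a) (f b)
    _ < c / 2 + c / 2 := add_lt_add (hfg a) (hfg b)
    _ = c := add_halves c
  exact (hsep a b hab).not_gt this

theorem stmt4 {X Y : Type*} [MetricSpace X] [MetricSpace Y]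
    [CompactSpace X] [CompactSpace Y] (ε : ℝ) (hε : 0 < ε)
    (f : X → Y) (hf : Continuous f)
    (hemb : ∀ y : Y, Metric.diam (f ⁻¹' {y}) < ε) :
    ∃ δ > 0, ∀ g : X → Y, Continuous g →
      (∀ x, dist (f x) (g x) < δ) → ∀ y : Y, Metric.diam (g ⁻¹' {y}) < ε :=
  stmt4_general ε hε f hf hemb
end

section
/- Let G be a countable group acting by homeomorphisms on a compact metric space X, and suppose (X,G) satisfies (TSBP ≤ d) for some natural number d, i.e. the boundary sets ∂U₀ arising in the definition satisfy: for every d+1 distinct group elements γ₀,…,γ_d, the intersection ⋂ᵢ γᵢ∂U₀ is empty. Then for any such boundary set B = ∂U₀, the upper Banach density of B is zero: for every ε > 0 there is a finite set F ⊆ G with sup_{x∈X} (1/|F|) Σ_{s∈F} 1_B(sx) < ε. -/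
/-! The orbit of a point meets a `(G, d)`-disjoint set at most `d` times, so averaging its
indicator over any `F` with more than `d / ε` elements gives density below `ε`; such `F`
exist because `G` is infinite. -/

open Pointwise
open scoped Classical

/-- `B` is `(G, d)`-disjoint: any `d + 1` pairwise distinct group elements translate
`B` to sets with empty intersection. -/
def GdDisjoint (G : Type*) {X : Type*} [Group G] [MulAction G X] (d : ℕ) (B : Set X) : Prop :=
  ∀ g : Fin (d + 1) → G, Function.Injective g → (⋂ i, g i • B) = ∅

theorem GdDisjoint.card_filter_smul_mem_le {G X : Type*} [Group G] [MulAction G X]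
    {d : ℕ} {B : Set X} (hB : GdDisjoint G d B) (F : Finset G) (x : X) :
    (F.filter fun s => s • x ∈ B).card ≤ d := by
  set S := F.filter fun s => s • x ∈ B
  by_contra! hS
  -- `s • x ∈ B` iff `x ∈ s⁻¹ • B`, so `d + 1` distinct such `s` give a point in `d + 1` translates.
  let g : Fin (d + 1) → G := fun i => (S.equivFin.symm (Fin.castLE hS i) : G)⁻¹
  have hg : Function.Injective g :=
    inv_injective.comp <| Subtype.val_injective.comp <|
      S.equivFin.symm.injective.comp (Fin.castLE_injective hS)
  have hx : x ∈ ⋂ i, g i • B := Set.mem_iInter.2 fun i => by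
    rw [Set.mem_inv_smul_set_iff]
    exact (Finset.mem_filter.1 (S.equivFin.symm (Fin.castLE hS i)).2).2
  simp [hB g hg] at hx

theorem stmt11_general {G X : Type*} [Group G] [Infinite G]
    [MulAction G X]
    (d : ℕ) (B : Set X) (hB : GdDisjoint G d B) :
    ∀ ε > (0 : ℝ), ∃ F : Finset G, F.Nonempty ∧
      ∀ x : X, ((F.filter fun s => s • x ∈ B).card : ℝ) / (F.card : ℝ) < ε := by
  intro ε hε
  obtain ⟨n, hn⟩ := exists_nat_gt ((d : ℝ) / ε)
  obtain ⟨F, hF⟩ := Infinite.exists_subset_card_eq G (n + 1)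
  have hcard : (0 : ℝ) < F.card := by rw [hF]; positivity
  have hdF : (d : ℝ) / F.card < ε := by
    rw [div_lt_iff₀ hcard, hF, Nat.cast_succ]
    rw [div_lt_iff₀ hε] at hn
    linarith
  refine ⟨F, Finset.card_pos.1 (Nat.cast_pos.1 hcard), fun x => ?_⟩
  calc ((F.filter fun s => s • x ∈ B).card : ℝ) / F.card ≤ d / F.card := by
        gcongr
        exact_mod_cast hB.card_filter_smul_mem_le F x
    _ < ε := hdF

theorem stmt11 {G X : Type*} [Group G] [Countable G] [Infinite G]
    [MetricSpace X] [CompactSpace X] [MulAction G X] [ContinuousConstSMul G X]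
    (d : ℕ) (B : Set X) (hB : GdDisjoint G d B) :
    ∀ ε > (0 : ℝ), ∃ F : Finset G, F.Nonempty ∧
      ∀ x : X, ((F.filter fun s => s • x ∈ B).card : ℝ) / (F.card : ℝ) < ε :=
  stmt11_general d B hB
end

section
/- Let (X, G) be a topological dynamical system with shapes: suppose {U_i : 0 ≤ i ≤ D} are open subsets of X and F ⊆ G is a finite set such that ⋃_{i=0}^{D} F·U_i = X and, for each i, the closure of U_i is (F', 1)-disjoint, where F' ⊇ F·F (i.e. every product of two elements of F lies in F'). If some x ∈ X satisfies gx = x for some g ∈ F with g ≠ e, then we reach a contradiction. Hence: if (X,G) has finite strong Rokhlin dimension with respect to a Følner sequence {F_n} exhausting G, then the action G ↷ X is free. -/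
open Pointwise Set

/-! A nontrivial `g ∈ F` fixing `x = h • u` with `h ∈ F`, `u ∈ V i` puts `x` in the two distinct
translates `h • V i` and `(g * h) • V i`, both indexed by `F * F`. -/

section FixedPoints

variable {G X : Type*} [Group G] [MulAction G X]

theorem eq_one_of_smul_eq_self_of_pairwiseDisjoint {T : Set G} {S : Set X}
    (hT : T.PairwiseDisjoint (· • S)) {g h : G} (hh : h ∈ T) (hgh : g * h ∈ T)
    {y : X} (hy : y ∈ h • S) (hfix : g • y = y) : g = 1 := by
  by_contra hg
  have hne : g * h ≠ h := fun e => hg (mul_eq_right.mp e)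
  have hy' : y ∈ (g * h) • S := by
    rw [mul_smul, ← hfix]
    exact smul_mem_smul_set hy
  exact disjoint_left.mp (hT hgh hh hne) hy' hy

theorem eq_one_of_smul_eq_self_of_iUnion_smul_eq_univ {ι : Type*} {F T : Set G}
    {V : ι → Set X} (hone : 1 ∈ F) (hFF : F * F ⊆ T) (hdisj : ∀ i, T.PairwiseDisjoint (· • V i))
    (hcov : ⋃ i, F • V i = univ) {g : G} (hg : g ∈ F) {x : X} (hx : g • x = x) : g = 1 := by
  have hxcov : x ∈ ⋃ i, F • V i := hcov ▸ mem_univ x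
  obtain ⟨i, h, hh, u, hu, rfl⟩ := mem_iUnion.mp hxcov
  have hhT : h ∈ T := by simpa using hFF (mul_mem_mul hh hone)
  exact eq_one_of_smul_eq_self_of_pairwiseDisjoint (hdisj i) hhT (hFF (mul_mem_mul hg hh))
    (smul_mem_smul_set hu) hx

end FixedPoints

theorem stmt14_general {G X : Type*} [Group G] [MetricSpace X]
    [MulAction G X]
    (F : ℕ → Finset G) (hone : ∀ n, (1 : G) ∈ F n)
    (hexh : ∀ g : G, ∃ n, g ∈ F n) (D : ℕ)
    (hsRok : ∀ n : ℕ, ∃ n' ≥ n, ∃ U : Fin (D + 1) → Set X,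
      (∀ i, IsOpen (U i)) ∧
      ((F n : Set G) * (F n : Set G) ⊆ (F n' : Set G)) ∧
      (∀ i, ∀ g₁ ∈ F n', ∀ g₂ ∈ F n', g₁ ≠ g₂ →
        Disjoint (g₁ • closure (U i)) (g₂ • closure (U i))) ∧
      (⋃ i, (F n : Set G) • U i) = Set.univ) :
    ∀ (g : G) (x : X), g • x = x → g = 1 := by
  intro g x hgx
  obtain ⟨n, hgn⟩ := hexh g
  obtain ⟨n', -, U, -, hFF, hdisj, hcov⟩ := hsRok n
  have hcov' : ⋃ i, (F n : Set G) • closure (U i) = univ :=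
    eq_univ_of_univ_subset <| hcov ▸ iUnion_mono fun i => smul_subset_smul_left subset_closure
  exact eq_one_of_smul_eq_self_of_iUnion_smul_eq_univ (hone n) hFF hdisj hcov' hgn hgx

theorem stmt14 {G X : Type*} [Group G] [Countable G] [MetricSpace X] [CompactSpace X]
    [MulAction G X] [ContinuousConstSMul G X]
    (F : ℕ → Finset G) (hmono : Monotone F) (hone : ∀ n, (1 : G) ∈ F n)
    (hexh : ∀ g : G, ∃ n, g ∈ F n) (D : ℕ)
    (hsRok : ∀ n : ℕ, ∃ n' ≥ n, ∃ U : Fin (D + 1) → Set X,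
      (∀ i, IsOpen (U i)) ∧
      ((F n : Set G) * (F n : Set G) ⊆ (F n' : Set G)) ∧
      (∀ i, ∀ g₁ ∈ F n', ∀ g₂ ∈ F n', g₁ ≠ g₂ →
        Disjoint (g₁ • closure (U i)) (g₂ • closure (U i))) ∧
      (⋃ i, (F n : Set G) • U i) = Set.univ) :
    ∀ (g : G) (x : X), g • x = x → g = 1 :=
  stmt14_general F hone hexh D hsRok
end
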